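/- arXiv:2206.01946 — 8 statements merged into one kernel-verified Lean document; each statement's English description precedes it below -/
import Mathlib

section
/- For every weak Büchi automaton A_w = (Q, δ, I, Q_F, ∅) and the co-Büchi automaton A_c = (Q, δ, I, Q\Q_F, ∅) obtained by swapping accepting and non-accepting states, the direct simulation relation on A_w is contained in the fair simulation relation on A_c. -/
attribute [local instance] Classical.propDecidable

universe u v

variable {A : Type u} {Q : Type v}

/-- `π` is an (infinite) trace of the transition function `δ` over the word `w`. -/
def IsTrace (δ : Q → A → Set Q) (w : ℕ → A) (π : ℕ → Q) : Prop :=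
  ∀ i, π (i + 1) ∈ δ (π i) (w i)

/-- co-Büchi acceptance: only finitely many visits to `F`. -/
def FinAcc (F : Set Q) (π : ℕ → Q) : Prop := ∃ n, ∀ m ≥ n, π m ∉ F

/-- Büchi acceptance (state-based): infinitely many visits to `F`. -/
def InfAcc (F : Set Q) (π : ℕ → Q) : Prop := ∀ n, ∃ m ≥ n, π m ∈ F

/-- Büchi acceptance with accepting states `F` and accepting transitions `δF`. -/
def BuchiAccT (F : Set Q) (δF : Set (Q × A × Q)) (w : ℕ → A) (π : ℕ → Q) : Prop :=
  ∀ n, ∃ m ≥ n, π m ∈ F ∨ (π m, w m, π (m + 1)) ∈ δF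

/-- Successors of a set of states. -/
def stepSet (δ : Q → A → Set Q) (S : Set Q) (a : A) : Set Q := ⋃ p ∈ S, δ p a

/-- The subset-construction sequence `ρ^B_α`. -/
def subsetSeq (δ : Q → A → Set Q) (w : ℕ → A) (B : Set Q) : ℕ → Set Q
  | 0 => B
  | i + 1 => stepSet δ (subsetSeq δ w B i) (w i)

/-- `Π_ρ`: the traces over `w` matching the sequence of sets `ρ` componentwise. -/
def TraceSet (δ : Q → A → Set Q) (w : ℕ → A) (ρ : ℕ → Set Q) : Set (ℕ → Q) :=
  {π | IsTrace δ w π ∧ ∀ i, π i ∈ ρ i}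

/-- `Π_ρ` contains a (co-Büchi-)accepting trace. -/
def HasAccTrace (δ : Q → A → Set Q) (F : Set Q) (w : ℕ → A) (ρ : ℕ → Set Q) : Prop :=
  ∃ π ∈ TraceSet δ w ρ, FinAcc F π

/-- `Π_ρ^∪` (the union of the trace sets of all suffixes) contains an accepting trace. -/
def HasAccTraceU (δ : Q → A → Set Q) (F : Set Q) (w : ℕ → A) (ρ : ℕ → Set Q) : Prop :=
  ∃ i, HasAccTrace δ F (fun n => w (n + i)) (fun n => ρ (n + i))

/-- Reachability in the automaton. -/
def Reaches (δ : Q → A → Set Q) : Q → Q → Prop :=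
  Relation.ReflTransGen (fun p q => ∃ a, q ∈ δ p a)

/-- The maximal SCC containing `q`. -/
def scc (δ : Q → A → Set Q) (q : Q) : Set Q :=
  {p | Reaches δ p q ∧ Reaches δ q p}

/-- Weak automaton: states of the same SCC agree on acceptance. -/
def IsWeak (δ : Q → A → Set Q) (F : Set Q) : Prop :=
  ∀ p q, Reaches δ p q → Reaches δ q p → (p ∈ F ↔ q ∈ F)

/-- Fair simulation on the co-BA `(Q, δ, _, F, ∅)`. -/
def FairSim (δ : Q → A → Set Q) (F : Set Q) (p q : Q) : Prop :=
  ∀ (w : ℕ → A) (π : ℕ → Q), π 0 = p → IsTrace δ w π → FinAcc F π →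
    ∃ π', π' 0 = q ∧ IsTrace δ w π' ∧ FinAcc F π'

/-- `R` is a direct-simulation relation on the BA `(Q, δ, _, F, ∅)`. -/
def IsDirectSim (δ : Q → A → Set Q) (F : Set Q) (R : Q → Q → Prop) : Prop :=
  ∀ p q, R p q → (p ∈ F → q ∈ F) ∧ ∀ a, ∀ p' ∈ δ p a, ∃ q' ∈ δ q a, R p' q'

/-- `p` is directly simulated by `q`. -/
def DirectSim (δ : Q → A → Set Q) (F : Set Q) (p q : Q) : Prop :=
  ∃ R, IsDirectSim δ F R ∧ R p q

/-- The relation `⊑`: fair simulation refined by the reachability conditions. -/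
def SqSub (δ : Q → A → Set Q) (F : Set Q) (p q : Q) : Prop :=
  FairSim δ F p q ∧ Reaches δ p q ∧ (¬ Reaches δ q p ∨ p = q)

/-- One step of the Miyano–Hayashi-style construction with adjustment function `θ`. -/
noncomputable def mhStep (δ : Q → A → Set Q) (F : Set Q) (θ : Set Q → Set Q)
    (m : Set Q × Set Q) (a : A) : Set Q × Set Q :=
  let S' := θ (stepSet δ m.1 a)
  (S', if m.2 = ∅ then S' \ F else (stepSet δ m.2 a ∩ S') \ F)

/-- The (unique) run of the deterministic automaton `MiHay_θ(A_c)` on `w`. -/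
noncomputable def mhRun (δ : Q → A → Set Q) (F : Set Q) (θ : Set Q → Set Q)
    (I : Set Q) (w : ℕ → A) : ℕ → Set Q × Set Q
  | 0 => (θ I, θ I \ F)
  | i + 1 => mhStep δ F θ (mhRun δ F θ I w i) (w i)

/-- `MiHay_θ(A_c)` accepts `w`: the `B`-component is empty infinitely often. -/
def MhAccepts (δ : Q → A → Set Q) (F : Set Q) (θ : Set Q → Set Q)
    (I : Set Q) (w : ℕ → A) : Prop :=
  ∀ n, ∃ m ≥ n, (mhRun δ F θ I w m).2 = (∅ : Set Q)

/-- `w ∈ L(A_c)` for the co-BA `A_c = (Q, δ, I, F, ∅)`. -/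
def CoBuchiLang (δ : Q → A → Set Q) (I F : Set Q) (w : ℕ → A) : Prop :=
  ∃ π, π 0 ∈ I ∧ IsTrace δ w π ∧ FinAcc F π

/-- `w ∈ L(A)` for the BA `A = (Q, δ, I, F, δF)`. -/
def BuchiLang (δ : Q → A → Set Q) (I F : Set Q) (δF : Set (Q × A × Q)) (w : ℕ → A) : Prop :=
  ∃ π, π 0 ∈ I ∧ IsTrace δ w π ∧ BuchiAccT F δF w π

/-- Macrostates `(N, C, S, B)` of the NCSB-MaxRank construction. -/
abbrev Macro (Q : Type v) := Set Q × Set Q × Set Q × Set Q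

/-- The successor relation `δ'` of NCSB-MaxRank. -/
noncomputable def NcsbSucc (δ : Q → A → Set Q) (Q1 Q2 F : Set Q) (δF : Set (Q × A × Q))
    (m : Macro Q) (a : A) (m' : Macro Q) : Prop :=
  (¬ ∃ p ∈ m.2.2.1, ∃ q ∈ δ p a, (p, a, q) ∈ δF) ∧
  (let N' := stepSet δ m.1 a ∩ Q1
   let S' := stepSet δ m.2.2.1 a
   let C' := ((stepSet δ m.1 a ∩ Q2) ∪ stepSet δ m.2.1 a) \ S'
   let B' := if m.2.2.2 = ∅ then C' else stepSet δ m.2.2.2 a ∩ C'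
   m' = (N', C', S', B') ∨ (B' ∩ F = ∅ ∧ m' = (N', C' \ (S' ∪ B'), S' ∪ B', (∅ : Set Q))))

/-- Well-formed macrostates of NCSB-MaxRank. -/
def NcsbState (Q1 Q2 F : Set Q) (m : Macro Q) : Prop :=
  m.1 ⊆ Q1 ∧ m.2.1 ⊆ Q2 ∧ m.2.2.1 ⊆ Q2 \ F ∧ m.2.2.2 ⊆ m.2.1

/-- `R` is a run of `NCSB-MaxRank(A)` on `w`. -/
noncomputable def NcsbRun (δ : Q → A → Set Q) (Q1 Q2 I F : Set Q) (δF : Set (Q × A × Q))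
    (w : ℕ → A) (R : ℕ → Macro Q) : Prop :=
  R 0 = (Q1 ∩ I, Q2 ∩ I, (∅ : Set Q), Q2 ∩ I) ∧
  (∀ i, NcsbState Q1 Q2 F (R i)) ∧
  ∀ i, NcsbSucc δ Q1 Q2 F δF (R i) (w i) (R (i + 1))

/-- A run of `NCSB-MaxRank(A)` is accepting: `B = ∅` infinitely often. -/
def NcsbAcc (R : ℕ → Macro Q) : Prop := ∀ n, ∃ m ≥ n, (R m).2.2.2 = (∅ : Set Q)

theorem FinAcc.of_mem_imp_mem {G : Set Q} {π π' : ℕ → Q} (h : FinAcc G π)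
    (hmem : ∀ n, π' n ∈ G → π n ∈ G) : FinAcc G π' := by
  obtain ⟨n, hn⟩ := h
  exact ⟨n, fun m hm hG => hn m hm (hmem m hG)⟩

theorem IsDirectSim.exists_trace {δ : Q → A → Set Q} {F : Set Q} {R : Q → Q → Prop}
    (hR : IsDirectSim δ F R) {w : ℕ → A} {π : ℕ → Q} (hπ : IsTrace δ w π) {q : Q}
    (hq : R (π 0) q) :
    ∃ π', π' 0 = q ∧ IsTrace δ w π' ∧ ∀ n, R (π n) (π' n) := by
  have hstep : ∀ n x, R (π n) x → ∃ y ∈ δ x (w n), R (π (n + 1)) y :=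
    fun n x hx => (hR _ _ hx).2 (w n) _ (hπ n)
  choose! next hnext using hstep
  let π' : ℕ → Q := fun n => Nat.rec q (fun k x => next k x) n
  have hrel : ∀ n, R (π n) (π' n) := by
    intro n
    induction n with
    | zero => exact hq
    | succ k ih => exact (hnext k _ ih).2
  exact ⟨π', rfl, fun n => (hnext n _ (hrel n)).1, hrel⟩

theorem direct_sim_subset_fair_sim_general
    (δ : Q → A → Set Q) (F : Set Q) :
    ∀ p q : Q, DirectSim δ F p q → FairSim δ Fᶜ p q := by
  rintro p q ⟨R, hR, hpq⟩ w π rfl hπ hfin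
  obtain ⟨π', rfl, hπ', hrel⟩ := hR.exists_trace hπ hpq
  exact ⟨π', rfl, hπ', hfin.of_mem_imp_mem fun n hn hF => hn ((hR _ _ (hrel n)).1 hF)⟩

/-- For a weak BA `A_w = (Q, δ, I, F, ∅)` and the co-BA `A_c = (Q, δ, I, Fᶜ, ∅)`
obtained by swapping accepting and non-accepting states, direct simulation on `A_w`
is contained in fair simulation on `A_c`. -/
theorem direct_sim_subset_fair_sim
    (δ : Q → A → Set Q) (F : Set Q) (hweak : IsWeak δ F) :
    ∀ p q : Q, DirectSim δ F p q → FairSim δ Fᶜ p q :=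
  direct_sim_subset_fair_sim_general δ F
end

section
/- Let α be an infinite word and ρ, ρ' be sequences of sets of states with Π_ρ ∼ Π_{ρ'} and Π_ρ ⊆ Π_{ρ'}. Then Π_ρ ∼ Π_{ρ'}^∪, where Π_{ρ'}^∪ is the union over all i of the traces matching the suffix of ρ' starting at position i. -/
/-!
Every state of a subset-construction sequence `ρ'` has a predecessor in the previous set of
`ρ'`, so an accepting trace of a suffix of `ρ'` extends backwards, one step at a time, to an
accepting trace of `ρ'` itself. Hence `Π_{ρ'}^∪ ∼ Π_{ρ'}`, and the claim follows from
`Π_ρ ∼ Π_{ρ'}`.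
-/

attribute [local instance] Classical.propDecidable

universe u v

variable {A : Type u} {Q : Type v}

section BackwardClosed

variable {δ : Q → A → Set Q} {F : Set Q}

theorem FinAcc.cons {π : ℕ → Q} (p : Q) (h : FinAcc F π) :
    FinAcc F (fun n => Nat.casesOn n p π) := by
  obtain ⟨N, hN⟩ := h
  refine ⟨N + 1, fun m hm => ?_⟩
  obtain ⟨k, rfl⟩ : ∃ k, m = k + 1 := ⟨m - 1, by omega⟩
  exact hN k (by omega)

theorem HasAccTrace.of_tail {w : ℕ → A} {ρ : ℕ → Set Q} (hρ : ρ 1 ⊆ stepSet δ (ρ 0) (w 0))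
    (h : HasAccTrace δ F (fun n => w (n + 1)) (fun n => ρ (n + 1))) :
    HasAccTrace δ F w ρ := by
  obtain ⟨π, ⟨hπ, hπρ⟩, hacc⟩ := h
  obtain ⟨p, hp, hpπ⟩ := Set.mem_iUnion₂.mp (hρ (hπρ 0))
  refine ⟨fun n => Nat.casesOn n p π, ⟨?_, ?_⟩, hacc.cons p⟩
  · rintro (_ | i)
    exacts [hpπ, hπ i]
  · rintro (_ | i)
    exacts [hp, hπρ i]

theorem HasAccTrace.of_shift {w : ℕ → A} {ρ : ℕ → Set Q}
    (hρ : ∀ i, ρ (i + 1) ⊆ stepSet δ (ρ i) (w i)) (i : ℕ)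
    (h : HasAccTrace δ F (fun n => w (n + i)) (fun n => ρ (n + i))) :
    HasAccTrace δ F w ρ := by
  induction i with
  | zero => exact h
  | succ i ih =>
    refine ih (HasAccTrace.of_tail ?_ ?_)
    · simpa only [Nat.zero_add, Nat.add_comm 1] using hρ i
    · simpa only [Nat.add_right_comm _ 1 i, Nat.add_assoc] using h

theorem hasAccTraceU_iff_hasAccTrace {w : ℕ → A} {ρ : ℕ → Set Q}
    (hρ : ∀ i, ρ (i + 1) ⊆ stepSet δ (ρ i) (w i)) :
    HasAccTraceU δ F w ρ ↔ HasAccTrace δ F w ρ :=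
  ⟨fun ⟨i, h⟩ => h.of_shift hρ i, fun h => ⟨0, h⟩⟩

end BackwardClosed

theorem acc_equiv_suffix_union_general
    (δ : Q → A → Set Q) (F : Set Q) (w : ℕ → A) (B B' : Set Q)
    (hsim : HasAccTrace δ F w (subsetSeq δ w B) ↔ HasAccTrace δ F w (subsetSeq δ w B')) :
    HasAccTrace δ F w (subsetSeq δ w B) ↔ HasAccTraceU δ F w (subsetSeq δ w B') :=
  hsim.trans (hasAccTraceU_iff_hasAccTrace fun _ => subset_rfl).symm

/-- If `Π_ρ ∼ Π_{ρ'}` and `Π_ρ ⊆ Π_{ρ'}` for subset-construction sequences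
`ρ, ρ'`, then `Π_ρ ∼ Π_{ρ'}^∪`. -/
theorem acc_equiv_suffix_union
    (δ : Q → A → Set Q) (F : Set Q) (w : ℕ → A) (B B' : Set Q)
    (hsim : HasAccTrace δ F w (subsetSeq δ w B) ↔ HasAccTrace δ F w (subsetSeq δ w B'))
    (hsub : TraceSet δ w (subsetSeq δ w B) ⊆ TraceSet δ w (subsetSeq δ w B')) :
    HasAccTrace δ F w (subsetSeq δ w B) ↔ HasAccTraceU δ F w (subsetSeq δ w B') :=
  acc_equiv_suffix_union_general δ F w B B' hsim
end

section
/- For every infinite word α, Π_{ρ_α} is acc-equivalent to Π^∪_{sat(ρ_α)}, where sat is the saturation adjustment function adding to a macrostate all states fairly simulated by some member. -/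
attribute [local instance] Classical.propDecidable

universe u v

variable {A : Type u} {Q : Type v}

/-!
Saturation only adds states `p` that are fairly simulated by some `q ∈ ρ_i`, so an accepting
trace of the `i`-th suffix starting in such a `p` yields one starting in `q`. Since `q` is reachable
from `I` in `i` steps, prepending that finite run gives an accepting trace from `I`, and every
trace from `I` stays inside the subset-construction sequence.
-/

section

variable {δ : Q → A → Set Q} {F I : Set Q} {w : ℕ → A}

theorem fairSim_refl (δ : Q → A → Set Q) (F : Set Q) (p : Q) : FairSim δ F p p :=
  fun _ π h0 ht hf => ⟨π, h0, ht, hf⟩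

theorem mem_subsetSeq_of_isTrace {π : ℕ → Q} (h0 : π 0 ∈ I) (ht : IsTrace δ w π) :
    ∀ n, π n ∈ subsetSeq δ w I n
  | 0 => h0
  | n + 1 => Set.mem_iUnion₂.mpr ⟨π n, mem_subsetSeq_of_isTrace h0 ht n, ht n⟩

theorem hasAccTrace_subsetSeq_iff :
    HasAccTrace δ F w (subsetSeq δ w I) ↔ CoBuchiLang δ I F w :=
  ⟨fun ⟨π, ⟨ht, hmem⟩, hf⟩ => ⟨π, hmem 0, ht, hf⟩,
    fun ⟨π, h0, ht, hf⟩ => ⟨π, ⟨ht, mem_subsetSeq_of_isTrace h0 ht⟩, hf⟩⟩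

theorem coBuchiLang_singleton_of_mem_delta {r q : Q} (hq : q ∈ δ r (w 0))
    (h : CoBuchiLang δ {q} F (fun n => w (n + 1))) : CoBuchiLang δ {r} F w := by
  obtain ⟨π, rfl, ht, n, hn⟩ := h
  refine ⟨fun | 0 => r | k + 1 => π k, rfl, ?_, n + 1, ?_⟩
  · rintro (_ | k)
    exacts [hq, ht k]
  · rintro (_ | m) hm
    exacts [absurd hm (by omega), hn m (by omega)]

theorem coBuchiLang_of_mem_subsetSeq {i : ℕ} {q : Q} (hq : q ∈ subsetSeq δ w I i)
    (h : CoBuchiLang δ {q} F (fun n => w (n + i))) : CoBuchiLang δ I F w := by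
  induction i generalizing q with
  | zero =>
    obtain ⟨π, h0, ht, hf⟩ := h
    exact ⟨π, (h0 : π 0 = q) ▸ hq, ht, hf⟩
  | succ i ih =>
    obtain ⟨r, hr, hqr⟩ := Set.mem_iUnion₂.mp hq
    refine ih hr (coBuchiLang_singleton_of_mem_delta (w := fun n => w (n + i)) (q := q) ?_ ?_)
    · simpa using hqr
    · simp only [Nat.add_right_comm _ 1 i]
      exact h

end

/-- For every word, `Π_{ρ_α}` is acc-equivalent to `Π^∪_{sat(ρ_α)}`, where
`sat` adds to each macrostate all states fairly simulated by some member. -/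
theorem saturation_acc_equiv
    (δ : Q → A → Set Q) (F I : Set Q) (w : ℕ → A) :
    HasAccTrace δ F w (subsetSeq δ w I) ↔
      HasAccTraceU δ F w (fun i => {p | ∃ q ∈ subsetSeq δ w I i, FairSim δ F p q}) := by
  rw [hasAccTrace_subsetSeq_iff]
  constructor
  · rintro ⟨π, h0, ht, hf⟩
    exact ⟨0, π, ⟨ht, fun n => ⟨π n, mem_subsetSeq_of_isTrace h0 ht n, fairSim_refl δ F _⟩⟩, hf⟩
  · rintro ⟨i, π, ⟨ht, hmem⟩, hf⟩
    obtain ⟨q, hq, hsim⟩ := hmem 0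
    exact coBuchiLang_of_mem_subsetSeq (by simpa using hq) (hsim _ π rfl ht hf)
end

section
/- For every co-Büchi automaton A_c, the pruning-based construction satisfies L(MiHay_pr(A_c)) = Σ^ω \ L(A_c). -/
attribute [local instance] Classical.propDecidable

universe u v

variable {A : Type u} {Q : Type v}

/-!
If the `B`-component is eventually never empty, Kőnig's lemma yields a run of `A_c` that follows
the `S`-components (pruning only removes states) and from then on the `B`-components, which avoid
`Q_F'`.

Conversely, follow an accepting run of `A_c`; whenever its next state is pruned away, redirect it
along `⊑` to a kept state, from which fair simulation provides a new accepting run. A redirection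
moves to a state from which the abandoned one is unreachable, while every later state is reachable
from every earlier one, so as `Q` is finite only finitely many redirections occur. Afterwards one
accepting run stays inside the `S`-components; once it has left `Q_F'`, the next reset of `B`
captures it for good, so `B` is empty only finitely often.
-/

theorem exists_seq_of_forall_exists_succ {α : Type*} {P : ℕ → α → Prop} {R : ℕ → α → α → Prop}
    (h₀ : ∃ x, P 0 x) (hstep : ∀ n x, P n x → ∃ y, R n x y ∧ P (n + 1) y) :
    ∃ f : ℕ → α, ∀ n, P n (f n) ∧ R n (f n) (f (n + 1)) := by
  obtain ⟨x₀, hx₀⟩ := h₀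
  choose g hgR hgP using hstep
  let f : ∀ n, {x // P n x} :=
    fun n => Nat.rec ⟨x₀, hx₀⟩ (fun n x => ⟨g n x x.2, hgP n x x.2⟩) n
  exact ⟨fun n => (f n).1, fun n => ⟨(f n).2, hgR n _ (f n).2⟩⟩

theorem Finite.exists_forall_of_antitone {α : Type*} [Finite α] {P : ℕ → α → Prop}
    (hP : ∀ x, Antitone (P · x)) (h : ∀ m, ∃ x, P m x) : ∃ x, ∀ m, P m x := by
  by_contra! hfail
  choose g hg using hfail
  have : Nonempty α := ⟨(h 0).choose⟩
  obtain ⟨x₀, hx₀⟩ := Finite.exists_max g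
  obtain ⟨x, hx⟩ := h (g x₀)
  exact hg x (hP x (hx₀ x) hx)

/-- Kőnig's lemma for a time-indexed relation `E` on a finite type. -/
theorem exists_path_of_forall_exists_path {α : Type*} [Finite α] {E : ℕ → α → α → Prop}
    (h : ∀ m, ∃ f : ℕ → α, ∀ j < m, E j (f j) (f (j + 1))) :
    ∃ f : ℕ → α, ∀ j, E j (f j) (f (j + 1)) := by
  let PathFrom (k : ℕ) (x : α) (m : ℕ) : Prop :=
    ∃ f : ℕ → α, f 0 = x ∧ ∀ j < m, E (k + j) (f j) (f (j + 1))
  have hanti : ∀ k x, Antitone (PathFrom k x) := fun k x m m' hm ⟨f, hf0, hf⟩ =>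
    ⟨f, hf0, fun j hj => hf j (by omega)⟩
  have hstart : ∃ x, ∀ m, PathFrom 0 x m := by
    refine Finite.exists_forall_of_antitone (hanti 0) fun m => ?_
    obtain ⟨f, hf⟩ := h m
    exact ⟨f 0, f, rfl, by simpa using hf⟩
  have hstep : ∀ k x, (∀ m, PathFrom k x m) → ∃ y, E k x y ∧ ∀ m, PathFrom (k + 1) y m := by
    intro k x hx
    have hP : ∀ y, Antitone fun m => E k x y ∧ PathFrom (k + 1) y m :=
      fun y m m' hm ⟨hxy, hy⟩ => ⟨hxy, hanti (k + 1) y hm hy⟩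
    obtain ⟨y, hy⟩ := Finite.exists_forall_of_antitone hP fun m => by
      obtain ⟨f, rfl, hf⟩ := hx (m + 1)
      refine ⟨f 1, hf 0 (by omega), fun j => f (j + 1), rfl, fun j hj => ?_⟩
      simpa [Nat.add_right_comm, Nat.add_assoc] using hf (j + 1) (by omega)
    exact ⟨y, (hy 0).1, fun m => (hy m).2⟩
  obtain ⟨f, hf⟩ := exists_seq_of_forall_exists_succ hstart hstep
  exact ⟨f, fun j => (hf j).2⟩

theorem Relation.ReflTransGen.finite_setOf_not_of_chain {α : Type*} [Finite α]
    {r : α → α → Prop} {q s : ℕ → α} (hq : ∀ i, ReflTransGen r (q i) (s i))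
    (hs : ∀ i, ReflTransGen r (s i) (q (i + 1))) :
    {i | ¬ ReflTransGen r (q (i + 1)) (s i)}.Finite := by
  have hchain : ∀ i j, i ≤ j → ReflTransGen r (q i) (q j) := fun i j hij => by
    induction j, hij using Nat.le_induction with
    | base => exact .refl
    | succ j _ ih => exact ih.trans ((hq j).trans (hs j))
  refine Set.Finite.of_finite_image (f := s) (Set.toFinite _) fun i hi j hj hij => ?_
  by_contra hne
  wlog hlt : i < j generalizing i j
  · exact this j hj i hi hij.symm (Ne.symm hne) (by omega)
  exact hi (hij ▸ (hchain (i + 1) j hlt).trans (hq j))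

section Traces

variable {δ : Q → A → Set Q} {F : Set Q} {w : ℕ → A}

theorem mem_stepSet {S : Set Q} {p q : Q} {a : A} (hp : p ∈ S) (hq : q ∈ δ p a) :
    q ∈ stepSet δ S a :=
  Set.mem_biUnion hp hq

theorem exists_trace_of_frequently_nonempty [Finite Q] {T : ℕ → Set Q}
    (hT : ∀ k, T (k + 1) ⊆ stepSet δ (T k) (w k)) (hne : ∀ n, ∃ m ≥ n, (T m).Nonempty) :
    ∃ π, IsTrace δ w π ∧ ∀ k, π k ∈ T k := by
  have hback : ∀ m, ∀ q ∈ T m, ∃ f : ℕ → Q, f m = q ∧ ∀ j < m, f j ∈ T j ∧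
      f (j + 1) ∈ δ (f j) (w j) ∧ f (j + 1) ∈ T (j + 1) := by
    intro m
    induction m with
    | zero => exact fun q _ => ⟨fun _ => q, rfl, fun j hj => absurd hj (Nat.not_lt_zero j)⟩
    | succ m ih =>
      intro q hq
      obtain ⟨p, hp, hpq⟩ := Set.mem_iUnion₂.1 (hT m hq)
      obtain ⟨f, hfm, hf⟩ := ih p hp
      refine ⟨Function.update f (m + 1) q, by simp, fun j hj => ?_⟩
      rcases Nat.lt_succ_iff_lt_or_eq.1 hj with hj | rfl
      · simpa [Function.update_of_ne (show j ≠ m + 1 by omega),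
          Function.update_of_ne (show j + 1 ≠ m + 1 by omega)] using hf j hj
      · simpa [hfm] using ⟨hp, hpq, hq⟩
  obtain ⟨π, hπ⟩ := exists_path_of_forall_exists_path (E := fun j p p' =>
    p ∈ T j ∧ p' ∈ δ p (w j) ∧ p' ∈ T (j + 1)) fun m => by
    obtain ⟨m', hm', q, hq⟩ := hne m
    obtain ⟨f, -, hf⟩ := hback m' q hq
    exact ⟨f, fun j hj => hf j (by omega)⟩
  exact ⟨π, fun k => (hπ k).2.1, fun k => (hπ k).1⟩

-- Time is absolute, so a trace that is kept from one step to the next need not be shifted.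
def IsTraceFrom (δ : Q → A → Set Q) (w : ℕ → A) (i : ℕ) (π : ℕ → Q) : Prop :=
  ∀ k ≥ i, π (k + 1) ∈ δ (π k) (w k)

theorem FairSim.exists_traceFrom {p q : Q} (hpq : FairSim δ F p q) {i : ℕ} {π : ℕ → Q}
    (hπi : π i = p) (hπ : IsTraceFrom δ w i π) (hacc : FinAcc F π) :
    ∃ π', π' i = q ∧ IsTraceFrom δ w i π' ∧ FinAcc F π' := by
  obtain ⟨N, hN⟩ := hacc
  obtain ⟨π', hπ'0, hπ', N', hN'⟩ := hpq (fun k => w (k + i)) (fun k => π (k + i))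
    (by simpa using hπi) (fun k => by simpa [Nat.add_right_comm] using hπ (k + i) (by omega))
    ⟨N, fun m hm => hN (m + i) (by omega)⟩
  refine ⟨fun k => π' (k - i), by simpa using hπ'0, fun k hk => ?_,
    N' + i, fun m hm => hN' (m - i) (by omega)⟩
  simpa [Nat.sub_add_comm hk, Nat.sub_add_cancel hk] using hπ' (k - i)

end Traces

section MiyanoHayashi

variable {δ : Q → A → Set Q} {F I : Set Q} {θ : Set Q → Set Q} {w : ℕ → A}

theorem mhRun_succ_snd_of_eq_empty {i : ℕ} (h : (mhRun δ F θ I w i).2 = ∅) :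
    (mhRun δ F θ I w (i + 1)).2 = (mhRun δ F θ I w (i + 1)).1 \ F :=
  if_pos h

theorem mhRun_succ_snd_of_ne_empty {i : ℕ} (h : (mhRun δ F θ I w i).2 ≠ ∅) :
    (mhRun δ F θ I w (i + 1)).2 =
      (stepSet δ (mhRun δ F θ I w i).2 (w i) ∩ (mhRun δ F θ I w (i + 1)).1) \ F :=
  if_neg h

theorem mhRun_snd_subset (i : ℕ) : (mhRun δ F θ I w i).2 ⊆ (mhRun δ F θ I w i).1 \ F := by
  cases i with
  | zero => exact Set.Subset.rfl
  | succ i =>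
    by_cases h : (mhRun δ F θ I w i).2 = ∅
    · rw [mhRun_succ_snd_of_eq_empty h]
    · rw [mhRun_succ_snd_of_ne_empty h]
      exact Set.sdiff_subset_sdiff_left Set.inter_subset_right

theorem mhRun_succ_fst_subset (hθ : ∀ S, θ S ⊆ S) (i : ℕ) :
    (mhRun δ F θ I w (i + 1)).1 ⊆ stepSet δ (mhRun δ F θ I w i).1 (w i) :=
  hθ _

theorem coBuchiLang_of_not_mhAccepts [Finite Q] (hθ : ∀ S, θ S ⊆ S)
    (h : ¬ MhAccepts δ F θ I w) : CoBuchiLang δ I F w := by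
  obtain ⟨n, hn⟩ : ∃ n, ∀ m ≥ n, (mhRun δ F θ I w m).2 ≠ ∅ := by
    simpa [MhAccepts] using h
  let T : ℕ → Set Q := fun k => if k < n then (mhRun δ F θ I w k).1 else (mhRun δ F θ I w k).2
  have hTS : ∀ k, T k ⊆ (mhRun δ F θ I w k).1 := fun k => by
    by_cases hk : k < n
    · simp [T, hk]
    · simpa [T, hk] using (mhRun_snd_subset k).trans Set.sdiff_subset
  have hT : ∀ k, T (k + 1) ⊆ stepSet δ (T k) (w k) := fun k => by
    by_cases hk : k < n
    · simpa [T, hk] using (hTS (k + 1)).trans (mhRun_succ_fst_subset hθ k)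
    · simp only [T, hk, if_neg (show ¬ k + 1 < n by omega)]
      rw [mhRun_succ_snd_of_ne_empty (hn k (by omega))]
      exact Set.sdiff_subset.trans Set.inter_subset_left
  have hne : ∀ m, ∃ k ≥ m, (T k).Nonempty := fun m =>
    ⟨max m n, le_max_left m n, by
      simpa [T] using Set.nonempty_iff_ne_empty.2 (hn (max m n) (le_max_right m n))⟩
  obtain ⟨π, htr, hπT⟩ := exists_trace_of_frequently_nonempty hT hne
  refine ⟨π, hθ I (hTS 0 (hπT 0)), htr, n, fun m hm => ?_⟩
  have hπm : π m ∈ (mhRun δ F θ I w m).2 := by simpa [T, not_lt.2 hm] using hπT m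
  exact (mhRun_snd_subset m hπm).2

theorem mem_mhRun_snd_of_traceFrom {m : ℕ} (hm : (mhRun δ F θ I w m).2 = ∅) {π : ℕ → Q}
    (hπ : IsTraceFrom δ w m π) (hmem : ∀ k > m, π k ∈ (mhRun δ F θ I w k).1 \ F) :
    ∀ k > m, π k ∈ (mhRun δ F θ I w k).2 := by
  intro k hk
  induction k, hk using Nat.le_induction with
  | base => simpa [mhRun_succ_snd_of_eq_empty hm] using hmem (m + 1) (by omega)
  | succ k hk ih =>
    rw [mhRun_succ_snd_of_ne_empty ((Set.nonempty_of_mem ih).ne_empty)]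
    obtain ⟨hS, hF⟩ := hmem (k + 1) (by omega)
    exact ⟨⟨mem_stepSet ih (hπ k (by omega)), hS⟩, hF⟩

theorem not_mhAccepts_of_traceFrom {i₀ : ℕ} {π : ℕ → Q} (hπ : IsTraceFrom δ w i₀ π)
    (hmem : ∀ k ≥ i₀, π k ∈ (mhRun δ F θ I w k).1) (hacc : FinAcc F π) :
    ¬ MhAccepts δ F θ I w := by
  intro h
  obtain ⟨N, hN⟩ := hacc
  obtain ⟨m, hm, hmB⟩ := h (max i₀ N)
  have hB := mem_mhRun_snd_of_traceFrom hmB (fun k hk => hπ k (by omega))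
    fun k hk => ⟨hmem k (by omega), hN k (by omega)⟩
  obtain ⟨m', hm', hm'B⟩ := h (m + 1)
  simpa [hm'B] using hB m' hm'

variable {pr : Set Q → Set Q}

theorem exists_traceFrom_prune (hpr : ∀ S, ∀ q ∈ S, ∃ q' ∈ pr S, SqSub δ F q q')
    {S : Set Q} {j : ℕ} {π : ℕ → Q} (hS : π j ∈ S) (hπ : IsTraceFrom δ w j π)
    (hacc : FinAcc F π) :
    ∃ π', π' j ∈ pr S ∧ SqSub δ F (π j) (π' j) ∧ (π' j = π j → π' = π) ∧
      IsTraceFrom δ w j π' ∧ FinAcc F π' := by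
  obtain ⟨q', hq', hsq⟩ := hpr S (π j) hS
  by_cases hq : q' = π j
  · subst hq
    exact ⟨π, hq', hsq, fun _ => rfl, hπ, hacc⟩
  · obtain ⟨π', hπ'j, hπ', hacc'⟩ := hsq.1.exists_traceFrom rfl hπ hacc
    exact ⟨π', hπ'j ▸ hq', hπ'j ▸ hsq, fun h => absurd (hπ'j ▸ h) hq, hπ', hacc'⟩

theorem not_coBuchiLang_of_mhAccepts [Finite Q]
    (hpr : ∀ S, ∀ q ∈ S, ∃ q' ∈ pr S, SqSub δ F q q') (h : MhAccepts δ F pr I w) :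
    ¬ CoBuchiLang δ I F w := by
  rintro ⟨π₀, hπ₀I, hπ₀, hacc₀⟩
  obtain ⟨τ, hτ⟩ := exists_seq_of_forall_exists_succ
    (P := fun n τ => τ n ∈ (mhRun δ F pr I w n).1 ∧ IsTraceFrom δ w n τ ∧ FinAcc F τ)
    (R := fun n τ τ' => SqSub δ F (τ (n + 1)) (τ' (n + 1)) ∧ (τ' (n + 1) = τ (n + 1) → τ' = τ))
    (by
      obtain ⟨τ₀, h₀, -, -, h₀'⟩ :=
        exists_traceFrom_prune hpr hπ₀I (fun k _ => hπ₀ k) hacc₀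
      exact ⟨τ₀, h₀, h₀'⟩)
    (fun n τ ⟨hmem, htr, hacc⟩ => by
      obtain ⟨τ', h₁, h₂, h₃, h₄, h₅⟩ := exists_traceFrom_prune hpr
        (mem_stepSet hmem (htr n le_rfl)) (fun k hk => htr k (by omega)) hacc
      exact ⟨τ', ⟨h₂, h₃⟩, h₁, h₄, h₅⟩)
  simp only [forall_and] at hτ
  obtain ⟨⟨hmem, htr, hacc⟩, hsq, hkeep⟩ := hτ
  have hfin := Relation.ReflTransGen.finite_setOf_not_of_chain
    (q := fun i => τ i i) (s := fun i => τ i (i + 1))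
    (fun i => .single ⟨w i, htr i i le_rfl⟩) (fun i => (hsq i).2.1)
  obtain ⟨i₀, hi₀⟩ := hfin.bddAbove
  have hconst : ∀ i ≥ i₀ + 1, τ i = τ (i₀ + 1) := fun i hi => by
    induction i, hi using Nat.le_induction with
    | base => rfl
    | succ i hi ih =>
      have hreach : Reaches δ (τ (i + 1) (i + 1)) (τ i (i + 1)) :=
        not_not.1 fun hnot => absurd (hi₀ hnot) (by omega)
      rw [hkeep i ((hsq i).2.2.resolve_left (not_not.2 hreach)).symm, ih]
  refine not_mhAccepts_of_traceFrom (htr (i₀ + 1)) (fun k hk => ?_) (hacc (i₀ + 1)) h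
  simpa [hconst k hk] using hmem k

end MiyanoHayashi

/-- The pruning-based Miyano–Hayashi construction is correct:
`L(MiHay_pr(A_c)) = Σ^ω \ L(A_c)`. -/
theorem mihay_pruning_correct [Finite Q]
    (δ : Q → A → Set Q) (I F : Set Q)
    (pr : Set Q → Set Q)
    (hpr₁ : ∀ S, pr S ⊆ S)
    (hpr₂ : ∀ S, ∀ q ∈ S, ∃ q' ∈ pr S, SqSub δ F q q') :
    ∀ w : ℕ → A, MhAccepts δ F pr I w ↔ ¬ CoBuchiLang δ I F w := fun _ =>
  ⟨not_coBuchiLang_of_mhAccepts hpr₂, not_imp_comm.1 (coBuchiLang_of_not_mhAccepts hpr₁)⟩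
end

section
/- For every co-Büchi automaton A_c, the saturation-based construction satisfies L(MiHay_sat(A_c)) = Σ^ω \ L(A_c). -/
attribute [local instance] Classical.propDecidable

universe u v

variable {A : Type u} {Q : Type v}

/-! The argument works for any adjustment `θ` that is extensive (`S ⊆ θ S`) and adds no accepted
words (`L(θ S) ⊆ L(S)`); `sat` is such an adjustment by reflexivity and the definition of fair
simulation. Extensivity keeps every run of `A_c` inside the `S`-components, so an accepting run,
once it avoids `Q_F'` and the `B`-component is reset, is trapped in `B` forever and `B` is empty
only finitely often. Conversely, if `B` is eventually never empty, Kőnig's lemma yields an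
infinite trace through the `B`-components, which avoids `Q_F'`; pulling it back through the
layers `θ (stepSet δ S a)` gives an accepting run of `A_c` from `I`. -/

open Filter

section Konig

variable {δ : Q → A → Set Q} {a : ℕ → A} {B : ℕ → Set Q}

lemma exists_path_of_subset_stepSet (hstep : ∀ k, B (k + 1) ⊆ stepSet δ (B k) (a k)) :
    ∀ j, ∀ q ∈ B j, ∃ g : ℕ → Q, g j = q ∧
      (∀ k ≤ j, g k ∈ B k) ∧ ∀ k < j, g (k + 1) ∈ δ (g k) (a k) := by
  intro j
  induction j with
  | zero => exact fun q hq => ⟨fun _ => q, rfl, fun k hk => by rwa [Nat.le_zero.mp hk], by simp⟩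
  | succ j ih =>
    intro q hq
    obtain ⟨r, hr, hqr⟩ : ∃ r ∈ B j, q ∈ δ r (a j) := by simpa [stepSet] using hstep j hq
    obtain ⟨g, hgj, hgB, hgδ⟩ := ih r hr
    refine ⟨fun k => if k ≤ j then g k else q, by simp, fun k hk => ?_, fun k hk => ?_⟩
    · dsimp only
      split_ifs with h
      · exact hgB k h
      · rwa [show k = j + 1 by omega]
    · rcases Nat.lt_succ_iff_lt_or_eq.mp hk with hk | rfl
      · simpa [hk.le, Nat.succ_le_of_lt hk] using hgδ k hk
      · simpa [hgj] using hqr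

/-- Kőnig's lemma, via a limit of finite paths along a nonprincipal ultrafilter. -/
lemma TraceSet.nonempty_of_subset_stepSet [Finite Q] (hne : ∀ k, (B k).Nonempty)
    (hstep : ∀ k, B (k + 1) ⊆ stepSet δ (B k) (a k)) : (TraceSet δ a B).Nonempty := by
  choose g _ hgB hgδ using fun j => exists_path_of_subset_stepSet hstep j _ (hne j).some_mem
  have hlim : ∀ k, ∃ q, ∀ᶠ j in (hyperfilter ℕ : Filter ℕ), g j k = q := fun k => by
    obtain ⟨q, hq⟩ := (Ultrafilter.map (g · k) (hyperfilter ℕ)).eq_pure_of_finite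
    exact ⟨q, Ultrafilter.mem_map.mp (hq ▸ Ultrafilter.mem_pure.mpr (Set.mem_singleton q))⟩
  choose σ hσ using hlim
  have hfar : ∀ k, ∃ j, k + 1 ≤ j ∧ g j k = σ k ∧ g j (k + 1) = σ (k + 1) := fun k =>
    (((eventually_ge_atTop (k + 1)).filter_mono Nat.hyperfilter_le_atTop).and
      ((hσ k).and (hσ (k + 1)))).exists
  refine ⟨σ, fun k => ?_, fun k => ?_⟩
  · obtain ⟨j, hj, hk, hk1⟩ := hfar k
    exact hk1 ▸ hk ▸ hgδ j k hj
  · obtain ⟨j, hj, hk, -⟩ := hfar k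
    exact hk ▸ hgB j k (by omega)

end Konig

section CoBuchiLang

variable {δ : Q → A → Set Q} {F : Set Q}

lemma coBuchiLang_of_stepSet {S : Set Q} {w : ℕ → A}
    (h : CoBuchiLang δ (stepSet δ S (w 0)) F (fun k => w (k + 1))) : CoBuchiLang δ S F w := by
  obtain ⟨π, hπ0, hπ, n, hn⟩ := h
  obtain ⟨r, hr, hπr⟩ : ∃ r ∈ S, π 0 ∈ δ r (w 0) := by simpa [stepSet] using hπ0
  refine ⟨fun | 0 => r | k + 1 => π k, hr, fun | 0 => hπr | k + 1 => hπ k, n + 1, ?_⟩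
  rintro (_ | m) hm
  · omega
  · exact hn m (by omega)

lemma FairSim.refl (p : Q) : FairSim δ F p p :=
  fun _ _ hπ0 hπ hacc => ⟨_, hπ0, hπ, hacc⟩

lemma coBuchiLang_of_fairSim_saturation {S : Set Q} {w : ℕ → A}
    (h : CoBuchiLang δ {p | ∃ q ∈ S, FairSim δ F p q} F w) : CoBuchiLang δ S F w := by
  obtain ⟨π, ⟨q, hq, hsim⟩, hπ, hacc⟩ := h
  obtain ⟨π', hπ'0, hπ', hacc'⟩ := hsim w π rfl hπ hacc
  exact ⟨π', hπ'0 ▸ hq, hπ', hacc'⟩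

end CoBuchiLang

namespace mhRun

variable {δ : Q → A → Set Q} {F : Set Q} {θ : Set Q → Set Q} {I : Set Q} {w : ℕ → A}

lemma fst_zero : (mhRun δ F θ I w 0).1 = θ I := rfl

lemma fst_succ (i : ℕ) :
    (mhRun δ F θ I w (i + 1)).1 = θ (stepSet δ (mhRun δ F θ I w i).1 (w i)) := rfl

lemma snd_succ_of_eq_empty {i : ℕ} (h : (mhRun δ F θ I w i).2 = ∅) :
    (mhRun δ F θ I w (i + 1)).2 = (mhRun δ F θ I w (i + 1)).1 \ F := by
  simp [mhRun, mhStep, h]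

lemma snd_succ_of_ne_empty {i : ℕ} (h : (mhRun δ F θ I w i).2 ≠ ∅) :
    (mhRun δ F θ I w (i + 1)).2 =
      (stepSet δ (mhRun δ F θ I w i).2 (w i) ∩ (mhRun δ F θ I w (i + 1)).1) \ F := by
  simp [mhRun, mhStep, h]

lemma snd_subset (i : ℕ) : (mhRun δ F θ I w i).2 ⊆ (mhRun δ F θ I w i).1 \ F := by
  cases i with
  | zero => rfl
  | succ i =>
    by_cases h : (mhRun δ F θ I w i).2 = ∅
    · rw [snd_succ_of_eq_empty h]
    · rw [snd_succ_of_ne_empty h]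
      exact Set.sdiff_subset_sdiff_left Set.inter_subset_right

lemma mem_fst_of_isTrace (hθ : ∀ S, S ⊆ θ S) {π : ℕ → Q} (hπ0 : π 0 ∈ I)
    (hπ : IsTrace δ w π) (i : ℕ) : π i ∈ (mhRun δ F θ I w i).1 := by
  induction i with
  | zero => exact hθ I hπ0
  | succ i ih => exact hθ _ (Set.mem_biUnion ih (hπ i))

lemma coBuchiLang_of_fst (hθ : ∀ S w, CoBuchiLang δ (θ S) F w → CoBuchiLang δ S F w) (i : ℕ)
    (h : CoBuchiLang δ (mhRun δ F θ I w i).1 F (fun k => w (i + k))) : CoBuchiLang δ I F w := by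
  induction i with
  | zero => exact hθ I w (by simpa only [fst_zero, Nat.zero_add] using h)
  | succ i ih =>
    refine ih (coBuchiLang_of_stepSet (hθ _ _ ?_))
    simpa only [fst_succ, Nat.add_zero, ← Nat.add_assoc, Nat.add_right_comm i 1] using h

end mhRun

section Correctness

variable {δ : Q → A → Set Q} {F : Set Q} {θ : Set Q → Set Q} {I : Set Q} {w : ℕ → A}

lemma not_coBuchiLang_of_mhAccepts_s6 (hθ : ∀ S, S ⊆ θ S) (h : MhAccepts δ F θ I w) :
    ¬ CoBuchiLang δ I F w := by
  rintro ⟨π, hπ0, hπ, n, hn⟩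
  obtain ⟨m, hm, hempty⟩ := h n
  have htrapped : ∀ k, π (m + 1 + k) ∈ (mhRun δ F θ I w (m + 1 + k)).2 := by
    intro k
    induction k with
    | zero =>
      rw [Nat.add_zero, mhRun.snd_succ_of_eq_empty hempty]
      exact ⟨mhRun.mem_fst_of_isTrace hθ hπ0 hπ _, hn _ (by omega)⟩
    | succ k ih =>
      rw [← Nat.add_assoc, mhRun.snd_succ_of_ne_empty (Set.nonempty_of_mem ih).ne_empty]
      exact ⟨⟨Set.mem_biUnion ih (hπ _), mhRun.mem_fst_of_isTrace hθ hπ0 hπ _⟩, hn _ (by omega)⟩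
  obtain ⟨m', hm', hempty'⟩ := h (m + 1)
  have := htrapped (m' - (m + 1))
  rw [Nat.add_sub_cancel' hm', hempty'] at this
  exact this

lemma mhAccepts_of_not_coBuchiLang [Finite Q]
    (hθ : ∀ S w, CoBuchiLang δ (θ S) F w → CoBuchiLang δ S F w) (h : ¬ CoBuchiLang δ I F w) :
    MhAccepts δ F θ I w := by
  by_contra hrej
  obtain ⟨n, hn⟩ : ∃ n, ∀ m ≥ n, (mhRun δ F θ I w m).2.Nonempty := by
    simpa [MhAccepts, Set.nonempty_iff_ne_empty] using hrej
  set B : ℕ → Set Q := fun k => (mhRun δ F θ I w (n + k)).2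
  have hstep : ∀ k, B (k + 1) ⊆ stepSet δ (B k) (w (n + k)) := fun k => by
    simp only [B, ← Nat.add_assoc,
      mhRun.snd_succ_of_ne_empty (hn (n + k) (by omega)).ne_empty]
    exact Set.sdiff_subset.trans Set.inter_subset_left
  obtain ⟨σ, hσ, hσB⟩ :=
    TraceSet.nonempty_of_subset_stepSet (fun k => hn (n + k) (by omega)) hstep
  refine h (mhRun.coBuchiLang_of_fst hθ n ⟨σ, ?_, hσ, 0, fun k _ => ?_⟩)
  · exact (mhRun.snd_subset n (hσB 0)).1
  · exact (mhRun.snd_subset (n + k) (hσB k)).2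

theorem mhAccepts_iff_not_coBuchiLang [Finite Q] (hext : ∀ S, S ⊆ θ S)
    (hpres : ∀ S w, CoBuchiLang δ (θ S) F w → CoBuchiLang δ S F w) :
    MhAccepts δ F θ I w ↔ ¬ CoBuchiLang δ I F w :=
  ⟨not_coBuchiLang_of_mhAccepts_s6 hext, mhAccepts_of_not_coBuchiLang hpres⟩

end Correctness

/-- The saturation-based Miyano–Hayashi construction is correct:
`L(MiHay_sat(A_c)) = Σ^ω \ L(A_c)`, where `sat(S) = {p | ∃ q ∈ S, p ⊑_f q}`. -/
theorem mihay_saturation_correct [Finite Q]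
    (δ : Q → A → Set Q) (I F : Set Q) :
    ∀ w : ℕ → A,
      MhAccepts δ F (fun S => {p | ∃ q ∈ S, FairSim δ F p q}) I w ↔
        ¬ CoBuchiLang δ I F w := fun _ =>
  mhAccepts_iff_not_coBuchiLang (fun _ p hp => ⟨p, hp, FairSim.refl p⟩)
    fun _ _ => coBuchiLang_of_fairSim_saturation
end

section
/- In the pruning argument for co-Büchi macrostate reduction: any chain of states p_1' , p_2', … arising from repeatedly replacing a trace by a ⊑-larger trace at strictly increasing positions contains pairwise distinct replacement states, and hence is finite (bounded by |Q|). -/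
attribute [local instance] Classical.propDecidable

universe u v

variable {A : Type u} {Q : Type v}

/-! The replacement states sit in an alternating reachability chain
`p_i ⇝ p'_i ⇝ p_{i+1} ⇝ p'_{i+1} ⇝ ⋯` (the first step from `⊑`, the second along the trace
`π^{i+1}`). A repetition `p'_i = p'_j` with `i < j` would therefore let `p'_j` reach `p_j`,
which condition (iii) of `⊑` forbids since `p_j ≠ p'_j`. -/

section AlternatingChain

open Relation

variable {α : Type*} {r : α → α → Prop} {p p' : ℕ → α} {n : ℕ}

theorem reflTransGen_alternating_chain (hup : ∀ k < n, ReflTransGen r (p k) (p' k))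
    (hlink : ∀ k, ReflTransGen r (p' k) (p (k + 1))) {i j : ℕ} (hij : i < j) (hjn : j ≤ n) :
    ReflTransGen r (p' i) (p j) := by
  induction j, hij using Nat.le_induction with
  | base => exact hlink i
  | succ j hij ih => exact ((ih (by omega)).trans (hup j (by omega))).trans (hlink j)

theorem injOn_of_alternating_chain (hup : ∀ k < n, ReflTransGen r (p k) (p' k))
    (hlink : ∀ k, ReflTransGen r (p' k) (p (k + 1)))
    (hback : ∀ k < n, ¬ ReflTransGen r (p' k) (p k)) :
    Set.InjOn p' (Set.Iio n) := by
  have key : ∀ i j, i < j → j < n → p' i ≠ p' j := fun i j hij hjn heq =>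
    hback j hjn (heq ▸ reflTransGen_alternating_chain hup hlink hij hjn.le)
  intro i hi j hj heq
  rcases lt_trichotomy i j with hij | rfl | hji
  · exact absurd heq (key i j hij hj)
  · rfl
  · exact absurd heq.symm (key j i hji hi)

end AlternatingChain

theorem IsTrace.reaches {δ : Q → A → Set Q} {w : ℕ → A} {π : ℕ → Q} (h : IsTrace δ w π)
    {a b : ℕ} (hab : a ≤ b) : Reaches δ (π a) (π b) := by
  induction b, hab using Nat.le_induction with
  | base => exact .refl
  | succ b _ ih => exact ih.tail ⟨w b, h b⟩

theorem SqSub.not_reaches_of_ne {δ : Q → A → Set Q} {F : Set Q} {p q : Q} (h : SqSub δ F p q)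
    (hne : p ≠ q) : ¬ Reaches δ q p :=
  h.2.2.resolve_right hne

/-- In the pruning argument, a chain of replacement states obtained by repeatedly
replacing a trace by a `⊑`-larger trace at strictly increasing positions consists
of pairwise distinct states, and hence its length is bounded by `|Q|`. -/
theorem pruning_chain_finite [Fintype Q]
    (δ : Q → A → Set Q) (F : Set Q) (w : ℕ → A)
    (n : ℕ) (π : ℕ → ℕ → Q) (ℓ : ℕ → ℕ)
    (hℓ : StrictMono ℓ)
    (htr : ∀ i, IsTrace δ w (π i))
    (hchain : ∀ i < n, SqSub δ F (π i (ℓ i)) (π (i + 1) (ℓ i)))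
    (hne : ∀ i < n, π i (ℓ i) ≠ π (i + 1) (ℓ i)) :
    (∀ i < n, ∀ j < n, i ≠ j → π (i + 1) (ℓ i) ≠ π (j + 1) (ℓ j)) ∧
      n ≤ Fintype.card Q := by
  have hinj : Set.InjOn (fun i => π (i + 1) (ℓ i)) (Set.Iio n) :=
    injOn_of_alternating_chain (p := fun i => π i (ℓ i)) (fun k hk => (hchain k hk).2.1)
      (fun k => (htr (k + 1)).reaches (hℓ.monotone k.le_succ))
      (fun k hk => (hchain k hk).not_reaches_of_ne (hne k hk))
  refine ⟨fun i hi j hj hij heq => hij (hinj hi hj heq), ?_⟩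
  simpa using Finset.card_le_card_of_injOn (s := Finset.range n) (t := Finset.univ) _
    (fun _ _ => Finset.mem_univ _) (by rwa [Finset.coe_range])
end

section
/- If p is directly simulated by q in a Büchi automaton, then every infinite trace from p over a word w that from some point on visits only accepting states is matched by a trace from q over w that from the same point on visits only accepting states. -/
attribute [local instance] Classical.propDecidable

universe u v

variable {A : Type u} {Q : Type v}

theorem IsTrace.exists_simulating_trace {δ : Q → A → Set Q} {R : Q → Q → Prop}
    (hR : ∀ p q, R p q → ∀ a, ∀ p' ∈ δ p a, ∃ q' ∈ δ q a, R p' q')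
    {w : ℕ → A} {π : ℕ → Q} (hπ : IsTrace δ w π) {q : Q} (hq : R (π 0) q) :
    ∃ π', π' 0 = q ∧ IsTrace δ w π' ∧ ∀ i, R (π i) (π' i) := by
  -- Running the recursion on states related to `π i` means `next` only has to exist there.
  choose next hnext_mem hnext_rel using
    fun i (q' : {q' // R (π i) q'}) => hR _ _ q'.2 (w i) _ (hπ i)
  let σ : (i : ℕ) → {q' // R (π i) q'} :=
    fun i => Nat.rec ⟨q, hq⟩ (fun i s => ⟨next i s, hnext_rel i s⟩) i
  exact ⟨fun i => (σ i).1, rfl, fun i => hnext_mem i (σ i), fun i => (σ i).2⟩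

theorem DirectSim.exists_trace_mem_of_mem {δ : Q → A → Set Q} {F : Set Q} {p q : Q}
    (h : DirectSim δ F p q) {w : ℕ → A} {π : ℕ → Q} (hπ0 : π 0 = p) (hπ : IsTrace δ w π) :
    ∃ π', π' 0 = q ∧ IsTrace δ w π' ∧ ∀ i, π i ∈ F → π' i ∈ F := by
  obtain ⟨R, hR, hpq⟩ := h
  obtain ⟨π', hπ'0, hπ', hrel⟩ :=
    hπ.exists_simulating_trace (fun p q hpq => (hR p q hpq).2) (hπ0 ▸ hpq)
  exact ⟨π', hπ'0, hπ', fun i => (hR _ _ (hrel i)).1⟩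

/-- If `p` is directly simulated by `q`, then every trace from `p` over `w` that
from position `n` on visits only accepting states is matched by a trace from `q`
over `w` that from position `n` on visits only accepting states. -/
theorem direct_sim_matches_eventually_accepting
    (δ : Q → A → Set Q) (F : Set Q) (p q : Q)
    (h : DirectSim δ F p q)
    (w : ℕ → A) (π : ℕ → Q) (hπ0 : π 0 = p) (hπ : IsTrace δ w π)
    (n : ℕ) (hn : ∀ ℓ ≥ n, π ℓ ∈ F) :
    ∃ π', π' 0 = q ∧ IsTrace δ w π' ∧ ∀ ℓ ≥ n, π' ℓ ∈ F := by
  obtain ⟨π', hπ'0, hπ', hF⟩ := h.exists_trace_mem_of_mem hπ0 hπ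
  exact ⟨π', hπ'0, hπ', fun ℓ hℓ => hF ℓ (hn ℓ hℓ)⟩
end

section
/- Every inherently weak Büchi automaton can be transformed into a language-equivalent weak Büchi automaton by saturating accepting states: marking every state of each inherently-weak-accepting MSCC as accepting and removing all accepting transitions preserves the language. -/
attribute [local instance] Classical.propDecidable

universe u v

variable {A : Type u} {Q : Type v}

/-- Every cycle within the set `C` contains an accepting state or transition. -/
def IWAcc (δ : Q → A → Set Q) (F : Set Q) (δF : Set (Q × A × Q)) (C : Set Q) : Prop :=
  ∀ (k : ℕ) (π : ℕ → Q) (a : ℕ → A), 0 < k → π k = π 0 →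
    (∀ i < k, π (i + 1) ∈ δ (π i) (a i)) → (∀ i ≤ k, π i ∈ C) →
    ∃ i < k, π i ∈ F ∨ (π i, a i, π (i + 1)) ∈ δF

lemma reaches_of_trace (δ : Q → A → Set Q) (w : ℕ → A) (π : ℕ → Q)
    (h : IsTrace δ w π) : ∀ i j, i ≤ j → Reaches δ (π i) (π j) := by
  intro i j hij
  induction j with
  | zero =>
    have : i = 0 := Nat.le_zero.mp hij
    subst this; exact Relation.ReflTransGen.refl
  | succ j ih =>
    rcases Nat.lt_or_ge i (j + 1) with h' | h'
    · exact (ih (Nat.lt_succ_iff.mp h')).tail ⟨w j, h j⟩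
    · have : i = j + 1 := le_antisymm hij h'
      subst this; exact Relation.ReflTransGen.refl

lemma scc_eq_of_mem (δ : Q → A → Set Q) {p q : Q} (h : p ∈ scc δ q) :
    scc δ p = scc δ q := by
  obtain ⟨hpq, hqp⟩ := h
  ext r
  constructor
  · rintro ⟨hrp, hpr⟩; exact ⟨hrp.trans hpq, hqp.trans hpr⟩
  · rintro ⟨hrq, hqr⟩; exact ⟨hrq.trans hqp, hpq.trans hqr⟩

lemma exists_infinitely_often [Finite Q] (π : ℕ → Q) :
    ∃ q : Q, ∀ n, ∃ m ≥ n, π m = q := by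
  obtain ⟨q, hq⟩ := Finite.exists_infinite_fiber π
  refine ⟨q, fun n => ?_⟩
  have hinf : (π ⁻¹' {q}).Infinite := Set.infinite_coe_iff.mp hq
  obtain ⟨m, hm, hnm⟩ := hinf.exists_gt n
  exact ⟨m, le_of_lt hnm, hm⟩

/-- Saturating accepting states of an inherently weak BA (marking every state of
each inherently-weak-accepting MSCC as accepting and dropping accepting
transitions) yields a weak, language-equivalent BA. -/
theorem inherently_weak_saturation [Finite Q]
    (δ : Q → A → Set Q) (I F : Set Q) (δF : Set (Q × A × Q))
    (hδF : ∀ p a r, (p, a, r) ∈ δF → r ∈ δ p a)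
    (hiw : ∀ q : Q, IWAcc δ F δF (scc δ q) ∨
      (scc δ q ∩ F = ∅ ∧ ∀ p ∈ scc δ q, ∀ a : A, ∀ r ∈ scc δ q, (p, a, r) ∉ δF)) :
    IsWeak δ {q | IWAcc δ F δF (scc δ q)} ∧
    ∀ w : ℕ → A,
      (∃ π, π 0 ∈ I ∧ IsTrace δ w π ∧ InfAcc {q | IWAcc δ F δF (scc δ q)} π) ↔
        BuchiLang δ I F δF w := by
  constructor
  · -- weakness
    intro p q hpq hqp
    have h : p ∈ scc δ q := ⟨hpq, hqp⟩
    simp only [Set.mem_setOf_eq, scc_eq_of_mem δ h]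
  · intro w
    constructor
    · rintro ⟨π, hI, htr, hacc⟩
      refine ⟨π, hI, htr, ?_⟩
      obtain ⟨q, hqinf⟩ := exists_infinitely_often π
      obtain ⟨n0, -, hn0⟩ := hqinf 0
      have hmem : ∀ m ≥ n0, π m ∈ scc δ q := by
        intro m hm
        obtain ⟨m', hm', hm'q⟩ := hqinf m
        exact ⟨hm'q ▸ reaches_of_trace δ w π htr m m' hm',
               hn0 ▸ reaches_of_trace δ w π htr n0 m hm⟩
      have hIWA : IWAcc δ F δF (scc δ q) := by
        obtain ⟨m, hm, hmF⟩ := hacc n0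
        have := scc_eq_of_mem δ (hmem m hm)
        simpa only [Set.mem_setOf_eq, this] using hmF
      intro n
      obtain ⟨m1, hm1, hq1⟩ := hqinf (max n n0)
      obtain ⟨m2, hm2, hq2⟩ := hqinf (m1 + 1)
      have hm1n : n ≤ m1 := le_trans (le_max_left _ _) hm1
      have hm1n0 : n0 ≤ m1 := le_trans (le_max_right _ _) hm1
      have hk : 0 < m2 - m1 := Nat.sub_pos_of_lt (Nat.lt_of_succ_le hm2)
      have hcyc := hIWA (m2 - m1) (fun i => π (m1 + i)) (fun i => w (m1 + i)) hk
        (by show π (m1 + (m2 - m1)) = π (m1 + 0)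
            rw [Nat.add_sub_cancel' (le_of_lt (Nat.lt_of_succ_le hm2)), Nat.add_zero, hq2, hq1])
        (fun i _ => htr (m1 + i))
        (fun i _ => hmem (m1 + i) (le_trans hm1n0 (Nat.le_add_right _ _)))
      obtain ⟨i, hik, hcase⟩ := hcyc
      exact ⟨m1 + i, le_trans hm1n (Nat.le_add_right _ _), hcase⟩
    · rintro ⟨π, hI, htr, hacc⟩
      refine ⟨π, hI, htr, ?_⟩
      obtain ⟨q, hqinf⟩ := exists_infinitely_often π
      obtain ⟨n0, -, hn0⟩ := hqinf 0
      have hmem : ∀ m ≥ n0, π m ∈ scc δ q := by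
        intro m hm
        obtain ⟨m', hm', hm'q⟩ := hqinf m
        exact ⟨hm'q ▸ reaches_of_trace δ w π htr m m' hm',
               hn0 ▸ reaches_of_trace δ w π htr n0 m hm⟩
      have hIWA : IWAcc δ F δF (scc δ q) := by
        rcases hiw q with h | ⟨hF, hT⟩
        · exact h
        · exfalso
          obtain ⟨m, hm, hc⟩ := hacc n0
          rcases hc with hc | hc
          · exact Set.eq_empty_iff_forall_notMem.mp hF (π m) ⟨hmem m hm, hc⟩
          · exact hT (π m) (hmem m hm) (w m) (π (m + 1))
              (hmem (m + 1) (le_trans hm (Nat.le_succ _))) hc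
      intro n
      obtain ⟨m, hm, hmq⟩ := hqinf (max n n0)
      refine ⟨m, le_trans (le_max_left _ _) hm, ?_⟩
      show IWAcc δ F δF (scc δ (π m))
      rw [scc_eq_of_mem δ (hmem m (le_trans (le_max_right _ _) hm))]
      exact hIWA
end
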